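/- Let a, b ∈ ℝ with b > 0, and let ρ₁(a,b) be the 6×6 matrix (1/(2(a²+b²))) · [[a²,0,0,0,ab,0],[0,b²,0,0,0,ab],[0,0,0,0,0,0],[0,0,0,0,0,0],[ab,0,0,0,b²,0],[0,ab,0,0,0,a²]], regarded as a 2⊗3 state. The eigenvalues of the partial transpose ρ₁(a,b)^Γ are a²/(2(a²+b²)), (b² + b√(b²+4a²))/(4(a²+b²)) and (b² − b√(b²+4a²))/(4(a²+b²)), each with multiplicity 2. In particular, for a ≠ 0, ρ₁(a,b)^Γ has exactly 2 negative eigenvalues (counted with multiplicity). -/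

import Mathlib

open Matrix BigOperators Polynomial
open scoped Kronecker ComplexOrder

noncomputable section

/-- Squared Hilbert–Schmidt norm `‖C‖² = Tr(CᴴC)`. -/
def hsNormSq {d : Type*} [Fintype d] (C : Matrix d d ℂ) : ℝ :=
  (Matrix.trace (Cᴴ * C)).re

/-- Trace norm `‖X‖₁ = Tr √(XᴴX)`. -/
def traceNorm {d : Type*} [Fintype d] [DecidableEq d] (X : Matrix d d ℂ) : ℝ :=
  (((Matrix.posSemidef_conjTranspose_mul_self X).1.eigenvectorUnitary : Matrix d d ℂ) *
      Matrix.diagonal (((↑) : ℝ → ℂ) ∘ (Real.sqrt ·) ∘ (Matrix.posSemidef_conjTranspose_mul_self X).1.eigenvalues) *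
      (star (Matrix.posSemidef_conjTranspose_mul_self X).1.eigenvectorUnitary : Matrix d d ℂ)).trace.re

/-- Partial transpose on the first factor: `ρ^Γ((i,k),(j,l)) = ρ((j,k),(i,l))`. -/
def ptranspose {m n : ℕ} (ρ : Matrix (Fin m × Fin n) (Fin m × Fin n) ℂ) :
    Matrix (Fin m × Fin n) (Fin m × Fin n) ℂ :=
  Matrix.of fun p q => ρ (q.1, p.2) (p.1, q.2)

/-- Negativity `N(ρ) = (‖ρ^Γ‖₁ - 1)/(m-1)`. -/
def negativity {m n : ℕ} (ρ : Matrix (Fin m × Fin n) (Fin m × Fin n) ℂ) : ℝ :=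
  (traceNorm (ptranspose ρ) - 1) / ((m : ℝ) - 1)

/-- `ψ` is an orthonormal basis of `ℂ^m` (an orthonormal family of `m` vectors). -/
def IsONB {m : ℕ} (ψ : Fin m → (Fin m → ℂ)) : Prop :=
  ∀ k l, (∑ i, star (ψ k i) * ψ l i) = if k = l then 1 else 0

/-- The rank-one projector `|v⟩⟨v|`. -/
def proj {m : ℕ} (v : Fin m → ℂ) : Matrix (Fin m) (Fin m) ℂ :=
  Matrix.vecMulVec v (fun j => star (v j))

/-- The von Neumann measurement map
`Π^A(ρ) = ∑ k, (|ψ_k⟩⟨ψ_k| ⊗ I_n) ρ (|ψ_k⟩⟨ψ_k| ⊗ I_n)`. -/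
def piA {m n : ℕ} (ψ : Fin m → (Fin m → ℂ))
    (ρ : Matrix (Fin m × Fin n) (Fin m × Fin n) ℂ) :
    Matrix (Fin m × Fin n) (Fin m × Fin n) ℂ :=
  ∑ k, (proj (ψ k) ⊗ₖ (1 : Matrix (Fin n) (Fin n) ℂ)) * ρ *
       (proj (ψ k) ⊗ₖ (1 : Matrix (Fin n) (Fin n) ℂ))

/-- Geometric discord
`D(ρ) = (m/(m-1)) · inf over von Neumann measurements of ‖ρ - Π^A(ρ)‖²`. -/
def gd {m n : ℕ} (ρ : Matrix (Fin m × Fin n) (Fin m × Fin n) ℂ) : ℝ :=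
  ((m : ℝ) / ((m : ℝ) - 1)) *
    ⨅ ψ : {ψ : Fin m → (Fin m → ℂ) // IsONB ψ}, hsNormSq (ρ - piA ψ.1 ρ)

/-- An `m ⊗ n` state: positive semidefinite with trace one. -/
def IsState {m n : ℕ} (ρ : Matrix (Fin m × Fin n) (Fin m × Fin n) ℂ) : Prop :=
  ρ.PosSemidef ∧ ρ.trace = 1

/-- Reindex a `6 × 6` matrix by `Fin 2 × Fin 3` with the ordering
`(1,1),(1,2),(1,3),(2,1),(2,2),(2,3)`. -/
def ofM6 (M : Matrix (Fin 6) (Fin 6) ℂ) :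
    Matrix (Fin 2 × Fin 3) (Fin 2 × Fin 3) ℂ :=
  Matrix.of fun p q =>
    M ⟨p.1.val * 3 + p.2.val, by have := p.1.isLt; have := p.2.isLt; omega⟩
      ⟨q.1.val * 3 + q.2.val, by have := q.1.isLt; have := q.2.isLt; omega⟩

/-- The family of states `ρ₁(a,b)`. -/
def rho1 (a b : ℝ) : Matrix (Fin 2 × Fin 3) (Fin 2 × Fin 3) ℂ :=
  ofM6 ((1 / (2 * ((a : ℂ)^2 + (b : ℂ)^2))) •
    !![(a:ℂ)^2, 0, 0, 0, (a:ℂ)*(b:ℂ), 0;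
       0, (b:ℂ)^2, 0, 0, 0, (a:ℂ)*(b:ℂ);
       0, 0, 0, 0, 0, 0;
       0, 0, 0, 0, 0, 0;
       (a:ℂ)*(b:ℂ), 0, 0, 0, (b:ℂ)^2, 0;
       0, (a:ℂ)*(b:ℂ), 0, 0, 0, (a:ℂ)^2])

/-!
Regrouping the indices as `{1}, {2,4}, {3,5}, {6}` makes `ρ₁(a,b)^Γ` block diagonal: the entry
`a²/(2(a²+b²))` twice, and twice a `2 × 2` block with trace `b²/(2(a²+b²))` and determinant
`-(ab/(2(a²+b²)))²`, whose eigenvalues are `(b² ± b√(b² + 4a²))/(4(a²+b²))`. For `a ≠ 0` and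
`b > 0` only the `-` root is negative. The eigenvalues of a Hermitian matrix are the roots of its
characteristic polynomial, so their signs are read off from this factorisation.
-/

lemma Matrix.IsHermitian.card_filter_eigenvalues_eq_countP {n : Type*} [Fintype n]
    [DecidableEq n] {A : Matrix n n ℂ} (hA : A.IsHermitian) {s : Multiset ℝ}
    (hs : A.charpoly = (s.map fun r : ℝ => X - C (r : ℂ)).prod) (P : ℝ → Prop)
    [DecidablePred P] :
    (Finset.univ.filter fun i => P (hA.eigenvalues i)).card = s.countP P := by
  have hspec : Finset.univ.val.map hA.eigenvalues = s := by
    apply Multiset.map_injective Complex.ofReal_injective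
    calc (Finset.univ.val.map hA.eigenvalues).map ((↑) : ℝ → ℂ) = A.charpoly.roots := by
          rw [hA.roots_charpoly_eq_eigenvalues, Multiset.map_map]; rfl
      _ = ((s.map ((↑) : ℝ → ℂ)).map fun z => X - C z).prod.roots := by
          rw [hs, Multiset.map_map]; rfl
      _ = s.map ((↑) : ℝ → ℂ) := roots_multiset_prod_X_sub_C _
  rw [← hspec, Multiset.countP_map]
  rfl

lemma X_sub_C_mul_X_sub_C_eq {R : Type*} [CommRing R] {β γ s t : R} (hs : β + γ = s)
    (ht : β * γ = -t) : (X - C β) * (X - C γ) = X ^ 2 - C s * X - C t := by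
  rw [← hs, ← neg_neg t, ← ht]
  simp only [C_add, C_mul, C_neg]
  ring

def blockPattern {R : Type*} [Zero R] (x y z s : R) : Matrix (Fin 6) (Fin 6) R :=
  !![x, 0, 0, 0, 0, 0;
     0, y, 0, s, 0, 0;
     0, 0, z, 0, s, 0;
     0, s, 0, z, 0, 0;
     0, 0, s, 0, y, 0;
     0, 0, 0, 0, 0, x]

lemma det_blockPattern {R : Type*} [CommRing R] (x y z s : R) :
    (blockPattern x y z s).det = (x * (y * z - s ^ 2)) ^ 2 := by
  simp [blockPattern, Matrix.det_succ_row_zero, Fin.sum_univ_succ, Fin.succAbove]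
  ring

lemma charmatrix_blockPattern {R : Type*} [CommRing R] (x y z s : R) :
    charmatrix (blockPattern x y z s) = blockPattern (X - C x) (X - C y) (X - C z) (-C s) := by
  ext i j
  fin_cases i <;> fin_cases j <;> simp [blockPattern]

lemma charpoly_blockPattern {R : Type*} [CommRing R] (x y z s : R) :
    (blockPattern x y z s).charpoly =
      ((X - C x) * ((X - C y) * (X - C z) - C s ^ 2)) ^ 2 := by
  rw [Matrix.charpoly, charmatrix_blockPattern, det_blockPattern, neg_sq]

lemma ofM6_eq_reindex (M : Matrix (Fin 6) (Fin 6) ℂ) :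
    ofM6 M = Matrix.reindex finProdFinEquiv.symm finProdFinEquiv.symm M := by
  ext p q
  simp only [ofM6, Matrix.reindex_apply, Matrix.submatrix_apply, Equiv.symm_symm,
    Matrix.of_apply]
  congr 1 <;> ext <;> simp [finProdFinEquiv] <;> ring

lemma ptranspose_rho1 (a b : ℝ) :
    ptranspose (rho1 a b) = ofM6 (blockPattern
      ((a ^ 2 / (2 * (a ^ 2 + b ^ 2)) : ℝ) : ℂ) ((b ^ 2 / (2 * (a ^ 2 + b ^ 2)) : ℝ) : ℂ) 0
      ((a * b / (2 * (a ^ 2 + b ^ 2)) : ℝ) : ℂ)) := by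
  ext ⟨i, k⟩ ⟨j, l⟩
  simp only [ptranspose, rho1, ofM6, blockPattern, Matrix.of_apply, Matrix.smul_apply]
  fin_cases i <;> fin_cases k <;> fin_cases j <;> fin_cases l <;> simp [div_eq_mul_inv] <;> ring

lemma add_rho1_eigenvalues {a b : ℝ} (hN : a ^ 2 + b ^ 2 ≠ 0) :
    (b ^ 2 + b * √(b ^ 2 + 4 * a ^ 2)) / (4 * (a ^ 2 + b ^ 2)) +
      (b ^ 2 - b * √(b ^ 2 + 4 * a ^ 2)) / (4 * (a ^ 2 + b ^ 2)) =
      b ^ 2 / (2 * (a ^ 2 + b ^ 2)) := by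
  field_simp
  ring

lemma mul_rho1_eigenvalues {a b : ℝ} (hN : a ^ 2 + b ^ 2 ≠ 0) :
    (b ^ 2 + b * √(b ^ 2 + 4 * a ^ 2)) / (4 * (a ^ 2 + b ^ 2)) *
      ((b ^ 2 - b * √(b ^ 2 + 4 * a ^ 2)) / (4 * (a ^ 2 + b ^ 2))) =
      -(a * b / (2 * (a ^ 2 + b ^ 2))) ^ 2 := by
  have hS : √(b ^ 2 + 4 * a ^ 2) ^ 2 = b ^ 2 + 4 * a ^ 2 := Real.sq_sqrt (by positivity)
  field_simp
  linear_combination (-4 * b ^ 2) * hS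

lemma charpoly_ptranspose_rho1 {a b : ℝ} (hN : a ^ 2 + b ^ 2 ≠ 0) :
    (ptranspose (rho1 a b)).charpoly =
      ((X - C ((a ^ 2 / (2 * (a ^ 2 + b ^ 2)) : ℝ) : ℂ)) *
       (X - C (((b ^ 2 + b * √(b ^ 2 + 4 * a ^ 2)) / (4 * (a ^ 2 + b ^ 2)) : ℝ) : ℂ)) *
       (X - C (((b ^ 2 - b * √(b ^ 2 + 4 * a ^ 2)) / (4 * (a ^ 2 + b ^ 2)) : ℝ) : ℂ))) ^ 2 := by
  set β := (b ^ 2 + b * √(b ^ 2 + 4 * a ^ 2)) / (4 * (a ^ 2 + b ^ 2))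
  set γ := (b ^ 2 - b * √(b ^ 2 + 4 * a ^ 2)) / (4 * (a ^ 2 + b ^ 2))
  have hquad : (X - C (β : ℂ)) * (X - C (γ : ℂ)) =
      X ^ 2 - C ((b ^ 2 / (2 * (a ^ 2 + b ^ 2)) : ℝ) : ℂ) * X -
        C ((((a * b / (2 * (a ^ 2 + b ^ 2)) : ℝ) : ℂ)) ^ 2) :=
    X_sub_C_mul_X_sub_C_eq (by exact_mod_cast add_rho1_eigenvalues hN)
      (by exact_mod_cast mul_rho1_eigenvalues hN)
  rw [ptranspose_rho1, ofM6_eq_reindex, Matrix.charpoly_reindex, charpoly_blockPattern,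
    mul_assoc _ (X - C _), hquad, C_0, sub_zero, ← map_pow]
  push_cast
  ring

lemma rho1_eigenvalue_neg {a b : ℝ} (ha : a ≠ 0) (hb : 0 < b) :
    (b ^ 2 - b * √(b ^ 2 + 4 * a ^ 2)) / (4 * (a ^ 2 + b ^ 2)) < 0 := by
  have hbS : b < √(b ^ 2 + 4 * a ^ 2) :=
    Real.lt_sqrt_of_sq_lt (by linarith [sq_pos_of_ne_zero ha])
  apply div_neg_of_neg_of_pos _ (by positivity)
  nlinarith

theorem stmt9 (a b : ℝ) (hb : 0 < b) :
    (ptranspose (rho1 a b)).charpoly =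
      ((X - C ((a ^ 2 / (2 * (a ^ 2 + b ^ 2)) : ℝ) : ℂ)) *
       (X - C (((b ^ 2 + b * Real.sqrt (b ^ 2 + 4 * a ^ 2)) /
          (4 * (a ^ 2 + b ^ 2)) : ℝ) : ℂ)) *
       (X - C (((b ^ 2 - b * Real.sqrt (b ^ 2 + 4 * a ^ 2)) /
          (4 * (a ^ 2 + b ^ 2)) : ℝ) : ℂ))) ^ 2 ∧
    (a ≠ 0 → ∀ h : (ptranspose (rho1 a b)).IsHermitian,
      (Finset.univ.filter fun i => h.eigenvalues i < 0).card = 2) := by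
  have hcharpoly := charpoly_ptranspose_rho1 (by positivity : a ^ 2 + b ^ 2 ≠ 0)
  refine ⟨hcharpoly, fun ha h => ?_⟩
  set α := a ^ 2 / (2 * (a ^ 2 + b ^ 2))
  set β := (b ^ 2 + b * √(b ^ 2 + 4 * a ^ 2)) / (4 * (a ^ 2 + b ^ 2))
  set γ := (b ^ 2 - b * √(b ^ 2 + 4 * a ^ 2)) / (4 * (a ^ 2 + b ^ 2))
  have hα : ¬α < 0 := not_lt.mpr (by positivity)
  have hβ : ¬β < 0 := not_lt.mpr (by positivity)
  have hγ : γ < 0 := rho1_eigenvalue_neg ha hb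
  rw [h.card_filter_eigenvalues_eq_countP (s := {α, β, γ} + {α, β, γ}) ?_ (· < 0)]
  · simp [hα, hβ, hγ, ← Multiset.cons_zero]
  · rw [hcharpoly, Multiset.map_add, Multiset.prod_add]
    simp only [Multiset.insert_eq_cons, Multiset.map_cons, Multiset.map_singleton,
      Multiset.prod_cons, Multiset.prod_singleton]
    ring

end
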